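/- arXiv:2304.12581 — 3 statements merged into one kernel-verified Lean document; each statement's English description precedes it below -/
import Mathlib

section
/- (Invariance of the zero set of a particular integral.) Let H, f, a : ℝ^n × ℝ^n → ℝ be smooth functions with {f, H} = a·f (pointwise). Let γ : I → ℝ^n × ℝ^n be a smooth solution of Hamilton's equations for H on an open interval I such that the function t ↦ f(γ(t)) is real-analytic on I. If f(γ(t₀)) = 0 for some t₀ ∈ I, then f(γ(t)) = 0 for every t ∈ I. -/
open scoped BigOperators

/-- The `i`-th coordinate direction in the `q` (position) factor of phase space `ℝⁿ × ℝⁿ`. -/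
noncomputable def eQ (n : ℕ) (i : Fin n) : (Fin n → ℝ) × (Fin n → ℝ) :=
  (Pi.single i 1, 0)

/-- The `i`-th coordinate direction in the `p` (momentum) factor of phase space `ℝⁿ × ℝⁿ`. -/
noncomputable def eP (n : ℕ) (i : Fin n) : (Fin n → ℝ) × (Fin n → ℝ) :=
  (0, Pi.single i 1)

/-- The canonical Poisson bracket `{f,g} = Σᵢ (∂f/∂qⁱ ∂g/∂pᵢ − ∂f/∂pᵢ ∂g/∂qⁱ)` on `ℝⁿ × ℝⁿ`. -/
noncomputable def poissonBracket {n : ℕ} (f g : (Fin n → ℝ) × (Fin n → ℝ) → ℝ)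
    (x : (Fin n → ℝ) × (Fin n → ℝ)) : ℝ :=
  ∑ i : Fin n, (fderiv ℝ f x (eQ n i) * fderiv ℝ g x (eP n i)
    - fderiv ℝ f x (eP n i) * fderiv ℝ g x (eQ n i))

/-- The Hamiltonian vector field `X_f = (∂f/∂p₁,…,∂f/∂pₙ, −∂f/∂q¹,…,−∂f/∂qⁿ)` on `ℝⁿ × ℝⁿ`. -/
noncomputable def hamVF {n : ℕ} (f : (Fin n → ℝ) × (Fin n → ℝ) → ℝ)
    (x : (Fin n → ℝ) × (Fin n → ℝ)) : (Fin n → ℝ) × (Fin n → ℝ) :=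
  (fun i => fderiv ℝ f x (eP n i), fun i => - fderiv ℝ f x (eQ n i))

/-!
Along a Hamiltonian trajectory `γ`, the function `g = f ∘ γ` has derivative `{f, H}(γ) = (a ∘ γ) g`,
so it solves a linear ODE with continuous coefficient `c = a ∘ γ`. For an antiderivative `F` of `c`,
`exp (-F) • g` has zero derivative on the interval, hence is constant, and it vanishes at `t₀`.
-/

open Set

theorem sum_smul_eQ_add_smul_eP {n : ℕ} (u v : Fin n → ℝ) :
    ∑ i : Fin n, (u i • eQ n i + v i • eP n i) = (u, v) := by
  ext j <;> simp [eQ, eP, Prod.fst_sum, Prod.snd_sum, Finset.sum_apply, Pi.single_apply]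

theorem ContinuousLinearMap.apply_eq_sum_eQ_eP {n : ℕ}
    (L : (Fin n → ℝ) × (Fin n → ℝ) →L[ℝ] ℝ) (u v : Fin n → ℝ) :
    L (u, v) = ∑ i : Fin n, (u i * L (eQ n i) + v i * L (eP n i)) := by
  simp [← sum_smul_eQ_add_smul_eP u v]

theorem fderiv_apply_hamVF {n : ℕ} (f H : (Fin n → ℝ) × (Fin n → ℝ) → ℝ)
    (x : (Fin n → ℝ) × (Fin n → ℝ)) :
    fderiv ℝ f x (hamVF H x) = poissonBracket f H x := by
  rw [hamVF, ContinuousLinearMap.apply_eq_sum_eQ_eP, poissonBracket]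
  exact Finset.sum_congr rfl fun i _ => by ring

theorem hasDerivAt_comp_eq_poissonBracket {n : ℕ} {f H : (Fin n → ℝ) × (Fin n → ℝ) → ℝ}
    {γ : ℝ → (Fin n → ℝ) × (Fin n → ℝ)} {t : ℝ} (hf : DifferentiableAt ℝ f (γ t))
    (hγ : HasDerivAt γ (hamVF H (γ t)) t) :
    HasDerivAt (fun s => f (γ s)) (poissonBracket f H (γ t)) t := by
  rw [← fderiv_apply_hamVF]
  exact hf.hasFDerivAt.comp_hasDerivAt t hγ

theorem ContinuousOn.hasDerivAt_integral_of_isOpen {E : Type*} [NormedAddCommGroup E]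
    [NormedSpace ℝ E] [CompleteSpace E] {c : ℝ → E} {s : Set ℝ} (hs : IsOpen s) [s.OrdConnected]
    (hc : ContinuousOn c s) {t₀ t : ℝ} (ht₀ : t₀ ∈ s) (ht : t ∈ s) :
    HasDerivAt (fun u => ∫ x in t₀..u, c x) (c t) t :=
  intervalIntegral.integral_hasDerivAt_right
    ((hc.mono (OrdConnected.uIcc_subset ‹_› ht₀ ht)).intervalIntegrable)
    (hc.stronglyMeasurableAtFilter hs t ht) (hc.continuousAt (hs.mem_nhds ht))

theorem eqOn_zero_of_hasDerivAt_eq_smul {E : Type*} [NormedAddCommGroup E] [NormedSpace ℝ E]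
    {c : ℝ → ℝ} {g : ℝ → E} {s : Set ℝ} (hs : IsOpen s) [s.OrdConnected]
    (hc : ContinuousOn c s) (hg : ∀ t ∈ s, HasDerivAt g (c t • g t) t)
    {t₀ : ℝ} (ht₀ : t₀ ∈ s) (hg₀ : g t₀ = 0) : s.EqOn g 0 := by
  set F : ℝ → ℝ := fun u => ∫ x in t₀..u, c x
  have hderiv : ∀ t ∈ s, HasDerivAt (fun u => Real.exp (-F u) • g u) 0 t := fun t ht =>
    (((hc.hasDerivAt_integral_of_isOpen hs ht₀ ht).neg.exp).smul (hg t ht)).congr_deriv <| by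
      rw [smul_smul, ← add_smul]; ring_nf; exact zero_smul _ _
  intro t ht
  have hconst : Real.exp (-F t) • g t = Real.exp (-F t₀) • g t₀ :=
    hs.is_const_of_deriv_eq_zero (OrdConnected.isPreconnected ‹_›)
      (fun u hu => (hderiv u hu).differentiableAt.differentiableWithinAt)
      (fun u hu => (hderiv u hu).deriv) ht ht₀
  rw [hg₀, smul_zero, smul_eq_zero] at hconst
  exact hconst.resolve_left (Real.exp_pos _).ne'

theorem particular_integral_zero_set_invariant_general {n : ℕ}
    (H f a : (Fin n → ℝ) × (Fin n → ℝ) → ℝ)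
    (hf : ContDiff ℝ (⊤ : ℕ∞) f) (ha : ContDiff ℝ (⊤ : ℕ∞) a)
    (hbracket : ∀ x, poissonBracket f H x = a x * f x)
    (t₁ t₂ : ℝ) (γ : ℝ → (Fin n → ℝ) × (Fin n → ℝ))
    (hHam : ∀ t ∈ Set.Ioo t₁ t₂, HasDerivAt γ (hamVF H (γ t)) t)
    (t₀ : ℝ) (ht₀ : t₀ ∈ Set.Ioo t₁ t₂) (hzero : f (γ t₀) = 0) :
    ∀ t ∈ Set.Ioo t₁ t₂, f (γ t) = 0 := by
  have hγ : ContinuousOn γ (Ioo t₁ t₂) := fun t ht => (hHam t ht).continuousAt.continuousWithinAt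
  have hderiv : ∀ t ∈ Ioo t₁ t₂, HasDerivAt (fun s => f (γ s)) (a (γ t) • f (γ t)) t :=
    fun t ht => by
      rw [smul_eq_mul, ← hbracket]
      exact hasDerivAt_comp_eq_poissonBracket (hf.differentiable (by simp) _) (hHam t ht)
  exact eqOn_zero_of_hasDerivAt_eq_smul isOpen_Ioo (ha.continuous.comp_continuousOn hγ) hderiv ht₀
    hzero

/-- (Invariance of the zero set of a particular integral.) If `{f,H} = a·f`
pointwise, `γ` is a smooth solution of Hamilton's equations for `H` on an open interval on
which `t ↦ f (γ t)` is real-analytic, and `f (γ t₀) = 0` for some `t₀` in the interval, then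
`f (γ t) = 0` for every `t` in the interval. -/
theorem particular_integral_zero_set_invariant {n : ℕ}
    (H f a : (Fin n → ℝ) × (Fin n → ℝ) → ℝ)
    (hH : ContDiff ℝ (⊤ : ℕ∞) H) (hf : ContDiff ℝ (⊤ : ℕ∞) f) (ha : ContDiff ℝ (⊤ : ℕ∞) a)
    (hbracket : ∀ x, poissonBracket f H x = a x * f x)
    (t₁ t₂ : ℝ) (γ : ℝ → (Fin n → ℝ) × (Fin n → ℝ))
    (hγsmooth : ContDiffOn ℝ (⊤ : ℕ∞) γ (Set.Ioo t₁ t₂))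
    (hHam : ∀ t ∈ Set.Ioo t₁ t₂, HasDerivAt γ (hamVF H (γ t)) t)
    (hanal : AnalyticOnNhd ℝ (fun t => f (γ t)) (Set.Ioo t₁ t₂))
    (t₀ : ℝ) (ht₀ : t₀ ∈ Set.Ioo t₁ t₂) (hzero : f (γ t₀) = 0) :
    ∀ t ∈ Set.Ioo t₁ t₂, f (γ t) = 0 :=
  particular_integral_zero_set_invariant_general H f a hf ha hbracket t₁ t₂ γ hHam t₀ ht₀ hzero
end

section
/- (Maximum number of independent functions in particular involution.) Let f₁,…,f_s : ℝ^n × ℝ^n → ℝ be smooth functions in particular involution, i.e. {f_i, f_j} = Σ_{m=1}^{s} a^{ij}_m f_m pointwise for some smooth functions a^{ij}_m. Suppose there exists a point x₀ ∈ ℝ^n × ℝ^n at which f₁(x₀) = ⋯ = f_s(x₀) = 0 and the differentials df₁|_{x₀}, …, df_s|_{x₀} are linearly independent. Then s ≤ n. -/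
open scoped BigOperators

section Aux

open Module

variable {n : ℕ}

/-- Decomposition of a vector of phase space in the standard basis `eQ`, `eP`. -/
private lemma phase_decomp (u : (Fin n → ℝ) × (Fin n → ℝ)) :
    u = ∑ i : Fin n, u.1 i • eQ n i + ∑ i : Fin n, u.2 i • eP n i := by
  ext j
  · simp [eQ, eP, Prod.fst_sum, Prod.snd_sum, Finset.sum_apply, Pi.single_apply, mul_ite]
  · simp [eQ, eP, Prod.fst_sum, Prod.snd_sum, Finset.sum_apply, Pi.single_apply, mul_ite]

/-- A continuous linear functional on phase space is determined by its values on `eQ`, `eP`. -/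
private lemma clm_apply_decomp (φ : ((Fin n → ℝ) × (Fin n → ℝ)) →L[ℝ] ℝ)
    (u : (Fin n → ℝ) × (Fin n → ℝ)) :
    φ u = ∑ i : Fin n, u.1 i * φ (eQ n i) + ∑ i : Fin n, u.2 i * φ (eP n i) := by
  conv_lhs => rw [phase_decomp u]
  simp [smul_eq_mul]

/-- The standard symplectic pairing on phase space, as a bilinear map. -/
private noncomputable def sympl (n : ℕ) :
    ((Fin n → ℝ) × (Fin n → ℝ)) →ₗ[ℝ]
      ((Fin n → ℝ) × (Fin n → ℝ)) →ₗ[ℝ] ℝ :=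
  LinearMap.mk₂ ℝ (fun u w => ∑ i : Fin n, (u.1 i * w.2 i - u.2 i * w.1 i))
    (by intro u u' w
        rw [← Finset.sum_add_distrib]
        exact Finset.sum_congr rfl fun i _ => by
          simp only [Prod.fst_add, Prod.snd_add, Pi.add_apply]; ring)
    (by intro c u w
        rw [smul_eq_mul, Finset.mul_sum]
        exact Finset.sum_congr rfl fun i _ => by
          simp only [Prod.smul_fst, Prod.smul_snd, Pi.smul_apply, smul_eq_mul]; ring)
    (by intro u w w'
        rw [← Finset.sum_add_distrib]
        exact Finset.sum_congr rfl fun i _ => by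
          simp only [Prod.fst_add, Prod.snd_add, Pi.add_apply]; ring)
    (by intro c u w
        rw [smul_eq_mul, Finset.mul_sum]
        exact Finset.sum_congr rfl fun i _ => by
          simp only [Prod.smul_fst, Prod.smul_snd, Pi.smul_apply, smul_eq_mul]; ring)

/-- Pairing the Hamiltonian vector field of `g` at `x` with any `u` recovers `dg|ₓ(u)`. -/
private lemma sympl_hamVF (g : (Fin n → ℝ) × (Fin n → ℝ) → ℝ)
    (x u : (Fin n → ℝ) × (Fin n → ℝ)) :
    sympl n (hamVF g x) u = fderiv ℝ g x u := by
  rw [clm_apply_decomp (fderiv ℝ g x) u]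
  simp only [sympl, LinearMap.mk₂_apply, hamVF]
  rw [← Finset.sum_add_distrib]
  apply Finset.sum_congr rfl
  intros; ring

end Aux

set_option maxHeartbeats 1000000 in
/-- (Maximum number of independent functions in particular involution.)
If smooth `f₁,…,f_s` on `ℝⁿ × ℝⁿ` satisfy `{fᵢ,fⱼ} = Σₘ aᵢⱼₘ fₘ` pointwise, and at some
common zero `x₀` of all the `fᵢ` the differentials `dfᵢ|_{x₀}` are linearly independent,
then `s ≤ n`. -/
theorem card_le_of_particular_involution {n s : ℕ}
    (f : Fin s → (Fin n → ℝ) × (Fin n → ℝ) → ℝ)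
    (a : Fin s → Fin s → Fin s → (Fin n → ℝ) × (Fin n → ℝ) → ℝ)
    (hf : ∀ i, ContDiff ℝ (⊤ : ℕ∞) (f i))
    (ha : ∀ i j m, ContDiff ℝ (⊤ : ℕ∞) (a i j m))
    (hinv : ∀ i j x, poissonBracket (f i) (f j) x = ∑ m, a i j m x * f m x)
    (x₀ : (Fin n → ℝ) × (Fin n → ℝ)) (hx₀ : ∀ i, f i x₀ = 0)
    (hind : LinearIndependent ℝ (fun i => fderiv ℝ (f i) x₀)) :
    s ≤ n := by
  classical
  -- the differentials as (non-continuous) linear functionals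
  have hφind : LinearIndependent ℝ
      (fun i => ((fderiv ℝ (f i) x₀ : ((Fin n → ℝ) × (Fin n → ℝ)) →L[ℝ] ℝ) :
        ((Fin n → ℝ) × (Fin n → ℝ)) →ₗ[ℝ] ℝ)) := by
    have hker : LinearMap.ker
        (ContinuousLinearMap.coeLM (R := ℝ) ℝ (M := (Fin n → ℝ) × (Fin n → ℝ)) (N₃ := ℝ)) = ⊥ := by
      rw [LinearMap.ker_eq_bot]
      intro x y hxy
      exact ContinuousLinearMap.coe_injective hxy
    exact hind.map' _ hker
  set φ : Fin s → Module.Dual ℝ ((Fin n → ℝ) × (Fin n → ℝ)) :=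
    fun i => ((fderiv ℝ (f i) x₀ : ((Fin n → ℝ) × (Fin n → ℝ)) →L[ℝ] ℝ) :
        ((Fin n → ℝ) × (Fin n → ℝ)) →ₗ[ℝ] ℝ) with hφ
  set v : Fin s → (Fin n → ℝ) × (Fin n → ℝ) := fun i => hamVF (f i) x₀ with hv
  have hsv : ∀ i u, sympl n (v i) u = φ i u := fun i u => sympl_hamVF (f i) x₀ u
  have hvind : LinearIndependent ℝ v := by
    apply LinearIndependent.of_comp (sympl n)
    have hcomp : (fun i => sympl n (v i)) = fun i =>
        ((φ i : ((Fin n → ℝ) × (Fin n → ℝ)) →ₗ[ℝ] ℝ)) := by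
      funext i; exact LinearMap.ext fun u => hsv i u
    show LinearIndependent ℝ (fun i => sympl n (v i))
    rw [hcomp]; exact hφind
  -- the brackets vanish at x₀
  have hbr : ∀ i j, poissonBracket (f i) (f j) x₀ = 0 := by
    intro i j
    rw [hinv i j x₀]
    simp [hx₀]
  -- each φ j annihilates each v i
  have hannz : ∀ j i, φ j (v i) = 0 := by
    intro j i
    rw [← hsv j (v i)]
    have hval : sympl n (v j) (v i) = poissonBracket (f j) (f i) x₀ := by
      simp only [sympl, LinearMap.mk₂_apply, hv, hamVF, poissonBracket]
      exact Finset.sum_congr rfl fun k _ => by ring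
    rw [hval, hbr]
  set W := Submodule.span ℝ (Set.range v) with hW
  have hWrank : Module.finrank ℝ W = s := by
    rw [finrank_span_eq_card hvind, Fintype.card_fin]
  have hmem : ∀ j, φ j ∈ W.dualAnnihilator := by
    intro j
    rw [Submodule.mem_dualAnnihilator]
    intro w hw
    have hle : W ≤ LinearMap.ker (φ j) := by
      rw [hW, Submodule.span_le]
      rintro _ ⟨i, rfl⟩
      exact hannz j i
    exact hle hw
  have hspan : Submodule.span ℝ (Set.range φ) ≤ W.dualAnnihilator := by
    rw [Submodule.span_le]
    rintro _ ⟨j, rfl⟩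
    exact hmem j
  have hcard : s ≤ Module.finrank ℝ W.dualAnnihilator := by
    have h₀ : Module.finrank ℝ (Submodule.span ℝ (Set.range φ)) = s := by
      rw [finrank_span_eq_card hφind, Fintype.card_fin]
    rw [← h₀]
    exact Submodule.finrank_mono hspan
  have h1 : Module.finrank ℝ (((Fin n → ℝ) × (Fin n → ℝ)) ⧸ W)
      = Module.finrank ℝ W.dualAnnihilator :=
    (Subspace.quotEquivAnnihilator W).finrank_eq
  have h2 := Submodule.finrank_quotient_add_finrank W
  have h3 : Module.finrank ℝ ((Fin n → ℝ) × (Fin n → ℝ)) = n + n := by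
    rw [Module.finrank_prod, Module.finrank_fin_fun]
  rw [h3, hWrank, h1] at h2
  omega
end

section
/- (Particular integrals of the central-force Hamiltonian in (r,φ,ρ) coordinates.) Let m > 0 and let V : (0,∞) → ℝ be differentiable. On the phase space with coordinates (r, φ, ρ, p_r, p_φ, p_ρ), restricted to r > 0 and ρ > 0, define K = (1/(2m))·(p_ρ² + p_r² + (2ρ/r)·p_ρ p_r + p_φ²/ρ²) + V(r). Then the canonical Poisson bracket in the pairs (r,p_r), (φ,p_φ), (ρ,p_ρ) satisfies: (i) {p_φ, K} = 0 identically, and (ii) {p_ρ, K} = −(p_r p_ρ)/(m r) + p_φ²/(m ρ³); in particular {p_ρ, K} = −(p_r/(m r))·p_ρ at every point with p_φ = 0. -/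
open scoped BigOperators

/-- The central-force Hamiltonian in the non-orthogonal coordinates `(r, φ, ρ)`:
position coordinates `x.1 0 = r`, `x.1 1 = φ`, `x.1 2 = ρ` and conjugate momenta
`x.2 0 = p_r`, `x.2 1 = p_φ`, `x.2 2 = p_ρ`. -/
noncomputable def Kcf (m : ℝ) (V : ℝ → ℝ) (x : (Fin 3 → ℝ) × (Fin 3 → ℝ)) : ℝ :=
  (1 / (2 * m)) * ((x.2 2) ^ 2 + (x.2 0) ^ 2
    + (2 * x.1 2 / x.1 0) * (x.2 2) * (x.2 0) + (x.2 1) ^ 2 / (x.1 2) ^ 2) + V (x.1 0)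

/-! Since `fderiv` of the momentum coordinate `pᵢ` is the projection onto it, `{pᵢ, g} = -∂g/∂qⁱ`
for every `g`. Both brackets are therefore partial derivatives of `K` along coordinate lines:
`K` does not depend on `φ`, and along the `ρ`-line it is an explicit rational function of `ρ`. -/

section PoissonBracket

variable {n : ℕ}

theorem fderiv_momentum (i : Fin n) (x : (Fin n → ℝ) × (Fin n → ℝ)) :
    fderiv ℝ (fun y : (Fin n → ℝ) × (Fin n → ℝ) => y.2 i) x
      = (ContinuousLinearMap.proj i).comp (ContinuousLinearMap.snd ℝ _ _) :=
  ((ContinuousLinearMap.proj i).comp (ContinuousLinearMap.snd ℝ (Fin n → ℝ) (Fin n → ℝ))).fderiv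

theorem poissonBracket_momentum_left (i : Fin n) (g : (Fin n → ℝ) × (Fin n → ℝ) → ℝ)
    (x : (Fin n → ℝ) × (Fin n → ℝ)) :
    poissonBracket (fun y => y.2 i) g x = -fderiv ℝ g x (eQ n i) := by
  simp [poissonBracket, fderiv_momentum, eQ, eP, Pi.single_apply]

theorem fderiv_apply_eq_of_hasDerivAt_line {g : (Fin n → ℝ) × (Fin n → ℝ) → ℝ}
    {x v : (Fin n → ℝ) × (Fin n → ℝ)} {a : ℝ} (hg : DifferentiableAt ℝ g x)
    (h : HasDerivAt (fun t : ℝ => g (x + t • v)) a 0) : fderiv ℝ g x v = a :=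
  (hg.hasFDerivAt.hasLineDerivAt v).unique h

end PoissonBracket

section CentralForce

variable (m : ℝ) (V : ℝ → ℝ) (x : (Fin 3 → ℝ) × (Fin 3 → ℝ))

theorem differentiableAt_Kcf (hr : x.1 0 ≠ 0) (hρ : x.1 2 ≠ 0)
    (hV : DifferentiableAt ℝ V (x.1 0)) : DifferentiableAt ℝ (Kcf m V) x := by
  unfold Kcf
  fun_prop (disch := simp [*])

theorem Kcf_add_smul_eQ_one (t : ℝ) : Kcf m V (x + t • eQ 3 1) = Kcf m V x := by
  simp [Kcf, eQ]

theorem Kcf_add_smul_eQ_two (t : ℝ) :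
    Kcf m V (x + t • eQ 3 2) = (1 / (2 * m)) * ((x.2 2) ^ 2 + (x.2 0) ^ 2
      + (2 * (x.1 2 + t) / x.1 0) * (x.2 2) * (x.2 0) + (x.2 1) ^ 2 / (x.1 2 + t) ^ 2)
      + V (x.1 0) := by
  simp [Kcf, eQ]

theorem hasDerivAt_Kcf_line_eQ_two (hρ : x.1 2 ≠ 0) :
    HasDerivAt (fun t : ℝ => Kcf m V (x + t • eQ 3 2))
      ((x.2 0 * x.2 2) / (m * x.1 0) - (x.2 1) ^ 2 / (m * (x.1 2) ^ 3)) 0 := by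
  simp only [Kcf_add_smul_eQ_two]
  have hρt : HasDerivAt (fun t : ℝ => x.1 2 + t) 1 0 := (hasDerivAt_id 0).const_add _
  have hcross : HasDerivAt (fun t : ℝ => 2 * (x.1 2 + t) / x.1 0 * x.2 2 * x.2 0)
      (2 / x.1 0 * x.2 2 * x.2 0) 0 := by
    simpa using (((hρt.const_mul 2).div_const (x.1 0)).mul_const (x.2 2)).mul_const (x.2 0)
  have hcentrifugal : HasDerivAt (fun t : ℝ => (x.2 1) ^ 2 / (x.1 2 + t) ^ 2)
      (-2 * (x.2 1) ^ 2 / (x.1 2) ^ 3) 0 := by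
    refine ((hasDerivAt_const (0 : ℝ) ((x.2 1) ^ 2)).fun_div (hρt.fun_pow 2)
      (pow_ne_zero 2 (by simpa using hρ))).congr_deriv ?_
    simp only [add_zero]
    field_simp
    ring
  refine ((((hcross.const_add ((x.2 2) ^ 2 + (x.2 0) ^ 2)).fun_add hcentrifugal).const_mul
    (1 / (2 * m))).add_const (V (x.1 0))).congr_deriv ?_
  ring

end CentralForce

theorem central_force_particular_integrals_general
    (m : ℝ) (V : ℝ → ℝ) (hV : ∀ s > (0 : ℝ), DifferentiableAt ℝ V s) :
    ∀ x : (Fin 3 → ℝ) × (Fin 3 → ℝ), 0 < x.1 0 → 0 < x.1 2 →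
      poissonBracket (fun y => y.2 1) (Kcf m V) x = 0 ∧
      poissonBracket (fun y => y.2 2) (Kcf m V) x
        = -(x.2 0 * x.2 2) / (m * x.1 0) + (x.2 1) ^ 2 / (m * (x.1 2) ^ 3) ∧
      (x.2 1 = 0 →
        poissonBracket (fun y => y.2 2) (Kcf m V) x = -(x.2 0 / (m * x.1 0)) * x.2 2) := by
  intro x hr hρ
  have hK := differentiableAt_Kcf m V x hr.ne' hρ.ne' (hV _ hr)
  have hdφ : fderiv ℝ (Kcf m V) x (eQ 3 1) = 0 :=
    fderiv_apply_eq_of_hasDerivAt_line hK <| by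
      simpa only [Kcf_add_smul_eQ_one] using hasDerivAt_const (0 : ℝ) (Kcf m V x)
  have hdρ : fderiv ℝ (Kcf m V) x (eQ 3 2)
      = (x.2 0 * x.2 2) / (m * x.1 0) - (x.2 1) ^ 2 / (m * (x.1 2) ^ 3) :=
    fderiv_apply_eq_of_hasDerivAt_line hK (hasDerivAt_Kcf_line_eQ_two m V x hρ.ne')
  simp only [poissonBracket_momentum_left, hdφ, hdρ]
  refine ⟨neg_zero, by ring, fun hpφ => by rw [hpφ]; ring⟩

/-- (Particular integrals of the central-force Hamiltonian in `(r,φ,ρ)`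
coordinates.) On the region `r > 0`, `ρ > 0`: (i) `{p_φ, K} = 0`, (ii)
`{p_ρ, K} = −p_r p_ρ/(m r) + p_φ²/(m ρ³)`; in particular `{p_ρ, K} = −(p_r/(m r))·p_ρ`
wherever `p_φ = 0`. -/
theorem central_force_particular_integrals
    (m : ℝ) (hm : 0 < m) (V : ℝ → ℝ) (hV : ∀ s > (0 : ℝ), DifferentiableAt ℝ V s) :
    ∀ x : (Fin 3 → ℝ) × (Fin 3 → ℝ), 0 < x.1 0 → 0 < x.1 2 →
      poissonBracket (fun y => y.2 1) (Kcf m V) x = 0 ∧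
      poissonBracket (fun y => y.2 2) (Kcf m V) x
        = -(x.2 0 * x.2 2) / (m * x.1 0) + (x.2 1) ^ 2 / (m * (x.1 2) ^ 3) ∧
      (x.2 1 = 0 →
        poissonBracket (fun y => y.2 2) (Kcf m V) x = -(x.2 0 / (m * x.1 0)) * x.2 2) :=
  central_force_particular_integrals_general m V hV
end
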